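/- The ℂ[x,y]-derivation D with D(z₁) = x, D(z₂) = 2yz₁ + 1, D(w) = y^2 on ℂ[x,y,z₁,z₂,w] preserves the ideal (xw - y(yz₁+1), xz₂ - z₁(yz₁+1), z₁w - yz₂) and is locally nilpotent; moreover the induced derivation on the coordinate ring of X₁ has no common zero with the variety X₁, i.e. the induced 𝔾ₐ-action on X₁ is fixed point free. -/

import Mathlib

/-!
The relations `D h₁ = 0`, `D h₂ = 0`, `D h₃ = h₁` show that `D` preserves the ideal. By the
Leibniz rule the elements killed by some iterate of a derivation form a subalgebra, so `D` is
locally nilpotent as soon as it is nilpotent on the coordinates, which holds because `D` is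
triangular: `z₁ ↦ x ↦ 0`, `z₂ ↦ 2yz₁ + 1 ↦ 2xy ↦ 0`, `w ↦ y² ↦ 0`. There are no fixed points
since `D w = y²` vanishes only where `y = 0`, and there `D z₂ = 2yz₁ + 1 = 1`.
-/

open MvPolynomial

/-- A derivation `D` is locally nilpotent if every element is annihilated by some
iterate of `D`. -/
def Derivation.IsLocallyNilpotent {R A : Type*} [CommRing R] [CommRing A] [Algebra R A]
    (D : Derivation R A A) : Prop :=
  ∀ a : A, ∃ n : ℕ, (⇑D)^[n] a = 0

/-- Coordinates on `𝔸⁵`: `x = X 0`, `y = X 1`, `z₁ = X 2`, `z₂ = X 3`, `w = X 4`. -/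
noncomputable abbrev R5 : Type := MvPolynomial (Fin 5) ℂ

/-- The `ℂ[x,y]`-derivation `D` with `D z₁ = x`, `D z₂ = 2yz₁ + 1`, `D w = y²`. -/
noncomputable def D4 : Derivation ℂ R5 R5 :=
  MvPolynomial.mkDerivation ℂ
    (fun i => if i = 2 then X 0
              else if i = 3 then 2 * X 1 * X 2 + 1
              else if i = 4 then (X 1) ^ 2 else 0)

/-- `xw - y(yz₁+1)`. -/
noncomputable def h1 : R5 := X 0 * X 4 - X 1 * (X 1 * X 2 + 1)
/-- `xz₂ - z₁(yz₁+1)`. -/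
noncomputable def h2 : R5 := X 0 * X 3 - X 2 * (X 1 * X 2 + 1)
/-- `z₁w - yz₂`. -/
noncomputable def h3 : R5 := X 2 * X 4 - X 1 * X 3

namespace Derivation

variable {R A : Type*} [CommRing R] [CommRing A] [Algebra R A] (D : Derivation R A A)

@[simp] theorem map_ofNat (n : ℕ) [n.AtLeastTwo] : D (ofNat(n) : A) = 0 :=
  D.map_natCast n

theorem apply_mem_span {s : Set A} (hs : ∀ g ∈ s, D g ∈ Ideal.span s) {a : A}
    (ha : a ∈ Ideal.span s) : D a ∈ Ideal.span s := by
  induction ha using Submodule.span_induction with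
  | mem g hg => exact hs g hg
  | zero => simp
  | add a b _ _ ha hb => rw [map_add]; exact add_mem ha hb
  | smul r a ha hDa =>
    rw [smul_eq_mul, leibniz, smul_eq_mul, smul_eq_mul]
    exact add_mem (Ideal.mul_mem_left _ _ hDa) (Ideal.mul_mem_right _ _ ha)

theorem iterate_eq_zero_of_le {a : A} {m n : ℕ} (ha : (⇑D)^[m] a = 0) (hmn : m ≤ n) :
    (⇑D)^[n] a = 0 := by
  obtain ⟨k, rfl⟩ := Nat.exists_eq_add_of_le' hmn
  rw [Function.iterate_add_apply, ha, iterate_map_zero]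

theorem iterate_mul_eq_zero {a b : A} {m n : ℕ} (ha : (⇑D)^[m] a = 0)
    (hb : (⇑D)^[n] b = 0) : (⇑D)^[m + n] (a * b) = 0 := by
  induction h : m + n generalizing a b m n with
  | zero =>
    obtain ⟨rfl, rfl⟩ : m = 0 ∧ n = 0 := by omega
    simp_all
  | succ N ih =>
    rcases m with _ | m
    · simp_all
    rcases n with _ | n
    · simp_all
    rw [Function.iterate_succ_apply, leibniz, smul_eq_mul, smul_eq_mul, iterate_map_add]
    rw [Function.iterate_succ_apply] at ha hb
    rw [ih (m := m + 1) (n := n) (by rwa [Function.iterate_succ_apply]) hb (by omega),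
      ih (m := n + 1) (n := m) (by rwa [Function.iterate_succ_apply]) ha (by omega), add_zero]

def nilSubalgebra : Subalgebra R A where
  carrier := {a | ∃ n, (⇑D)^[n] a = 0}
  mul_mem' := fun ⟨m, ha⟩ ⟨n, hb⟩ => ⟨m + n, D.iterate_mul_eq_zero ha hb⟩
  add_mem' := fun {a b} ⟨m, ha⟩ ⟨n, hb⟩ => ⟨max m n, by
    rw [iterate_map_add, D.iterate_eq_zero_of_le ha (le_max_left m n),
      D.iterate_eq_zero_of_le hb (le_max_right m n), add_zero]⟩
  algebraMap_mem' r := ⟨1, D.map_algebraMap r⟩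

theorem isLocallyNilpotent_of_adjoin_eq_top {s : Set A} (hs : Algebra.adjoin R s = ⊤)
    (hD : ∀ a ∈ s, ∃ n, (⇑D)^[n] a = 0) : D.IsLocallyNilpotent := by
  have : ⊤ ≤ D.nilSubalgebra := hs ▸ Algebra.adjoin_le hD
  exact fun a => this Algebra.mem_top

end Derivation

@[simp] lemma D4_x : D4 (X 0) = 0 := by simp [D4, mkDerivation_X]
@[simp] lemma D4_y : D4 (X 1) = 0 := by simp [D4, mkDerivation_X]
@[simp] lemma D4_z₁ : D4 (X 2) = X 0 := by simp [D4, mkDerivation_X]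
@[simp] lemma D4_z₂ : D4 (X 3) = 2 * X 1 * X 2 + 1 := by simp [D4, mkDerivation_X]
@[simp] lemma D4_w : D4 (X 4) = X 1 ^ 2 := by simp [D4, mkDerivation_X]

lemma D4_h1 : D4 h1 = 0 := by
  simp only [h1, map_sub, map_add, Derivation.leibniz, Derivation.map_one_eq_zero, smul_eq_mul,
    D4_x, D4_y, D4_z₁, D4_w]
  ring

lemma D4_h2 : D4 h2 = 0 := by
  simp only [h2, map_sub, map_add, Derivation.leibniz, Derivation.map_one_eq_zero, smul_eq_mul,
    D4_x, D4_y, D4_z₁, D4_z₂]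
  ring

lemma D4_h3 : D4 h3 = h1 := by
  simp only [h3, h1, map_sub, Derivation.leibniz, smul_eq_mul, D4_y, D4_z₁, D4_z₂, D4_w]
  ring

lemma D4_iterate_X_eq_zero (i : Fin 5) : ∃ n, (⇑D4)^[n] (X i : R5) = 0 := by
  fin_cases i
  · exact ⟨1, D4_x⟩
  · exact ⟨1, D4_y⟩
  · exact ⟨2, by simp⟩
  · exact ⟨3, by simp [Derivation.leibniz]⟩
  · exact ⟨2, by simp [pow_two, Derivation.leibniz]⟩

lemma D4_isLocallyNilpotent : D4.IsLocallyNilpotent :=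
  D4.isLocallyNilpotent_of_adjoin_eq_top adjoin_range_X
    (Set.forall_mem_range.2 D4_iterate_X_eq_zero)

/-- The derivation `D` with `D z₁ = x`, `D z₂ = 2yz₁+1`, `D w = y²` preserves the ideal
`(xw - y(yz₁+1), xz₂ - z₁(yz₁+1), z₁w - yz₂)` of `X₁` and is locally nilpotent; moreover
the induced `𝔾ₐ`-action on `X₁` is fixed point free: at no point of `X₁` do the three
images `D z₁ = x`, `D z₂ = 2yz₁+1`, `D w = y²` all vanish. -/
theorem stmt_4 :
    (∀ g ∈ Ideal.span {h1, h2, h3}, D4 g ∈ Ideal.span {h1, h2, h3}) ∧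
    D4.IsLocallyNilpotent ∧
    ∀ P : Fin 5 → ℂ, eval P h1 = 0 → eval P h2 = 0 → eval P h3 = 0 →
      ¬ (eval P (X 0) = 0 ∧ eval P (2 * X 1 * X 2 + 1) = 0 ∧
          eval P ((X 1) ^ 2) = 0) := by
  refine ⟨fun g => D4.apply_mem_span ?_, D4_isLocallyNilpotent, ?_⟩
  · rintro _ (rfl | rfl | rfl)
    · simp [D4_h1]
    · simp [D4_h2]
    · exact D4_h3 ▸ Ideal.subset_span (by simp)
  · rintro P - - - ⟨-, hyz, hy2⟩
    have hy : P 1 = 0 := by simpa using hy2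
    simp [hy] at hyz
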